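/- arXiv:1311.3286 — 6 statements merged into one kernel-verified Lean document; each statement's English description precedes it below -/
import Mathlib

section
/- Let D be an n×n real diagonal matrix with strictly positive diagonal entries and let A be a symmetric n×n real matrix such that both D − A and D − A·D⁻¹·A are invertible. Then (D − A)⁻¹ = (1/2)·( D⁻¹ + (I + D⁻¹·A)·(D − A·D⁻¹·A)⁻¹·(I + A·D⁻¹) ). -/
open Matrix

/-! Schur-complement factorisation: `(D - A) (I + D⁻¹A) = D - A D⁻¹ A`, so
`(D - A)` maps `(I + D⁻¹A) (D - A D⁻¹ A)⁻¹ (I + A D⁻¹)` to `I + A D⁻¹`, and `D⁻¹` to `I - A D⁻¹`.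
The two add up to `2 I`. -/

namespace Matrix

variable {m K : Type*} [Fintype m] [DecidableEq m]

theorem sub_mul_one_add_inv_mul [CommRing K] {D : Matrix m m K} (hD : IsUnit D.det)
    (A : Matrix m m K) : (D - A) * (1 + D⁻¹ * A) = D - A * D⁻¹ * A := by
  rw [sub_mul, mul_add, mul_add, mul_one, mul_one, mul_nonsing_inv_cancel_left _ _ hD,
    ← mul_assoc]
  abel

theorem sub_mul_inv_add_schur_correction [CommRing K] {D A : Matrix m m K} (hD : IsUnit D.det)
    (hS : IsUnit (D - A * D⁻¹ * A).det) :
    (D - A) * (D⁻¹ + (1 + D⁻¹ * A) * (D - A * D⁻¹ * A)⁻¹ * (1 + A * D⁻¹)) = 2 := by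
  have hcorr :
      (D - A) * ((1 + D⁻¹ * A) * (D - A * D⁻¹ * A)⁻¹ * (1 + A * D⁻¹)) = 1 + A * D⁻¹ := by
    rw [← mul_assoc, ← mul_assoc, sub_mul_one_add_inv_mul hD, mul_nonsing_inv _ hS, one_mul]
  rw [mul_add, hcorr, sub_mul, mul_nonsing_inv _ hD, ← one_add_one_eq_two]
  abel

theorem inv_sub_eq_half_smul [Field K] (h2 : (2 : K) ≠ 0) {D A : Matrix m m K}
    (hD : IsUnit D.det) (hS : IsUnit (D - A * D⁻¹ * A).det) :
    (D - A)⁻¹ = (1 / 2 : K) • (D⁻¹ + (1 + D⁻¹ * A) * (D - A * D⁻¹ * A)⁻¹ * (1 + A * D⁻¹)) := by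
  apply inv_eq_right_inv
  rw [mul_smul_comm, sub_mul_inv_add_schur_correction hD hS,
    ← map_ofNat (algebraMap K (Matrix m m K)) 2, Algebra.smul_def, ← map_mul,
    one_div_mul_cancel h2, map_one]

theorem isUnit_det_diagonal_of_pos [Field K] [LinearOrder K] [IsStrictOrderedRing K]
    {d : m → K} (hd : ∀ i, 0 < d i) :
    IsUnit (diagonal d).det := by
  rw [det_diagonal]
  exact (Finset.prod_pos fun i _ => hd i).ne'.isUnit

end Matrix

theorem stmt0_general {n : ℕ} (d : Fin n → ℝ) (hd : ∀ i, 0 < d i)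
    (D : Matrix (Fin n) (Fin n) ℝ) (hD : D = Matrix.diagonal d)
    (A : Matrix (Fin n) (Fin n) ℝ)
    (h2 : IsUnit (D - A * D⁻¹ * A).det) :
    (D - A)⁻¹ =
      (1 / 2 : ℝ) • (D⁻¹ + (1 + D⁻¹ * A) * (D - A * D⁻¹ * A)⁻¹ * (1 + A * D⁻¹)) := by
  subst hD
  exact inv_sub_eq_half_smul two_ne_zero (isUnit_det_diagonal_of_pos hd) h2

/-- For an `n × n` real diagonal matrix `D` with strictly positive diagonal
entries and a symmetric `A` such that `D - A` and `D - A * D⁻¹ * A` are invertible,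
`(D - A)⁻¹ = (1/2) • (D⁻¹ + (I + D⁻¹A) (D - A D⁻¹ A)⁻¹ (I + A D⁻¹))`. -/
theorem stmt0 {n : ℕ} (d : Fin n → ℝ) (hd : ∀ i, 0 < d i)
    (D : Matrix (Fin n) (Fin n) ℝ) (hD : D = Matrix.diagonal d)
    (A : Matrix (Fin n) (Fin n) ℝ) (hA : A.IsSymm)
    (h1 : IsUnit (D - A).det)
    (h2 : IsUnit (D - A * D⁻¹ * A).det) :
    (D - A)⁻¹ =
      (1 / 2 : ℝ) • (D⁻¹ + (1 + D⁻¹ * A) * (D - A * D⁻¹ * A)⁻¹ * (1 + A * D⁻¹)) :=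
  stmt0_general d hd D hD A h2
end

section
/- Let D be an n×n real diagonal matrix with strictly positive diagonal entries, let A be a symmetric n×n real matrix with nonnegative entries, and let 0 ≤ λ ≤ 1. If D^{-1/2}·A·D^{-1/2} ⪯ (1−λ)·I, then 0 ⪯ D^{-1/2}·A·D⁻¹·A·D^{-1/2} ⪯ (1−λ)²·I; equivalently, all eigenvalues of D⁻¹·A·D⁻¹·A lie between 0 and (1−λ)². -/
/-!
Write `M = S A S`, so that `S A D⁻¹ A S = M²` because `S² = D⁻¹`. Since `M` has nonnegative
entries, `|xᵀ M x| ≤ |x|ᵀ M |x| ≤ (1 - λ) ‖x‖²`, so the upper bound `M ⪯ (1 - λ) I` also gives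
`-(1 - λ) I ⪯ M`. With `P = (1 - λ) I - M` and `Q = (1 - λ) I + M` positive semidefinite and
commuting, `(1 - λ)² I - M² = P Q` is positive semidefinite as well, while `M² = Mᵀ M` is so
trivially.
-/

open Matrix

namespace Matrix

theorem abs_dotProduct_mulVec_le_of_nonneg {n : Type*} [Fintype n] {M : Matrix n n ℝ}
    (hM : ∀ i j, 0 ≤ M i j) (x : n → ℝ) : |x ⬝ᵥ M *ᵥ x| ≤ |x| ⬝ᵥ M *ᵥ |x| := by
  simp only [dotProduct, mulVec, Finset.mul_sum, Pi.abs_apply]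
  refine (Finset.abs_sum_le_sum_abs _ _).trans (Finset.sum_le_sum fun i _ => ?_)
  refine (Finset.abs_sum_le_sum_abs _ _).trans (le_of_eq (Finset.sum_congr rfl fun j _ => ?_))
  rw [abs_mul, abs_mul, abs_of_nonneg (hM i j)]

variable {n : Type*} [Fintype n] [DecidableEq n]

omit [Fintype n] in
theorem isHermitian_of_isHermitian_smul_one_sub {M : Matrix n n ℝ} {c : ℝ}
    (h : (c • 1 - M).IsHermitian) : M.IsHermitian := by
  simpa using (isHermitian_one.smul (.all c)).sub h

theorem PosSemidef.smul_one_add_of_nonneg {M : Matrix n n ℝ} {c : ℝ}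
    (h : (c • 1 - M).PosSemidef) (hM : ∀ i j, 0 ≤ M i j) : (c • 1 + M).PosSemidef := by
  have hq : ∀ x : n → ℝ, x ⬝ᵥ (c • 1 - M) *ᵥ x = c * (x ⬝ᵥ x) - x ⬝ᵥ M *ᵥ x := fun x => by
    simp [sub_mulVec, smul_mulVec]
  refine .of_dotProduct_mulVec_nonneg
    ((isHermitian_one.smul (.all c)).add (isHermitian_of_isHermitian_smul_one_sub h.isHermitian))
    fun x => ?_
  have habs := h.dotProduct_mulVec_nonneg |x|
  have hnorm : |x| ⬝ᵥ |x| = x ⬝ᵥ x := by simp [dotProduct, abs_mul_abs_self]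
  simp only [star_trivial, hq, hnorm] at habs ⊢
  simp only [add_mulVec, smul_mulVec, one_mulVec, dotProduct_add, dotProduct_smul, smul_eq_mul]
  linarith [neg_abs_le (x ⬝ᵥ M *ᵥ x), abs_dotProduct_mulVec_le_of_nonneg hM x]

open scoped MatrixOrder ComplexOrder in
theorem posSemidef_sq_smul_one_sub_mul_self {𝕜 : Type*} [RCLike 𝕜] {M : Matrix n n 𝕜} {c : ℝ}
    (hc : 0 ≤ c) (hsub : (c • 1 - M).PosSemidef) (hadd : (c • 1 + M).PosSemidef) :
    (c ^ 2 • 1 - M * M).PosSemidef := by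
  rcases hc.eq_or_lt with rfl | hc
  · have hM : M = 0 := le_antisymm (by simpa [le_iff] using hsub) (by simpa [le_iff] using hadd)
    simpa [hM] using PosSemidef.zero
  -- `P Q P + Q P Q = P Q (P + Q) = 2c (c² - M²)` for the commuting `P = c - M`, `Q = c + M`.
  have key : (c • 1 - M)ᴴ * (c • 1 + M) * (c • 1 - M) + (c • 1 + M)ᴴ * (c • 1 - M) * (c • 1 + M)
      = (2 * c) • (c ^ 2 • 1 - M * M) := by
    rw [hsub.isHermitian.eq, hadd.isHermitian.eq]
    simp only [sub_mul, mul_sub, add_mul, mul_add, smul_mul_smul, Matrix.one_mul, Matrix.mul_one,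
      Matrix.smul_mul, Matrix.mul_smul, smul_sub]
    module
  rw [← inv_smul_smul₀ (by positivity : 2 * c ≠ 0) (c ^ 2 • 1 - M * M), ← key]
  exact ((hadd.conjTranspose_mul_mul_same _).add (hsub.conjTranspose_mul_mul_same _)).smul
    (by positivity)

end Matrix

theorem stmt4_general {n : ℕ} (d : Fin n → ℝ) (hd : ∀ i, 0 < d i)
    (D : Matrix (Fin n) (Fin n) ℝ) (hD : D = Matrix.diagonal d)
    (A : Matrix (Fin n) (Fin n) ℝ) (hAnn : ∀ i j, 0 ≤ A i j)
    (lam : ℝ) (hlam1 : lam ≤ 1)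
    (S : Matrix (Fin n) (Fin n) ℝ)
    (hS : S = Matrix.diagonal fun i => (Real.sqrt (d i))⁻¹)
    (hbound : ((1 - lam) • (1 : Matrix (Fin n) (Fin n) ℝ) - S * A * S).PosSemidef) :
    (S * A * D⁻¹ * A * S).PosSemidef ∧
      ((1 - lam) ^ 2 • (1 : Matrix (Fin n) (Fin n) ℝ) - S * A * D⁻¹ * A * S).PosSemidef := by
  have hSS : S * S = D⁻¹ := by
    refine (inv_eq_left_inv ?_).symm
    rw [hS, hD, diagonal_mul_diagonal, diagonal_mul_diagonal, ← diagonal_one]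
    congr 1; funext i
    rw [← mul_inv, Real.mul_self_sqrt (hd i).le, inv_mul_cancel₀ (hd i).ne']
  have hsq : S * A * D⁻¹ * A * S = (S * A * S) * (S * A * S) := by
    simp only [← hSS, Matrix.mul_assoc]
  have hM : (S * A * S).IsHermitian := isHermitian_of_isHermitian_smul_one_sub hbound.isHermitian
  have hMnn : ∀ i j, 0 ≤ (S * A * S) i j := fun i j => by
    rw [hS, mul_diagonal, diagonal_mul]
    exact mul_nonneg (mul_nonneg (by positivity) (hAnn i j)) (by positivity)
  rw [hsq]
  refine ⟨?_, posSemidef_sq_smul_one_sub_mul_self (by linarith) hbound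
    (hbound.smul_one_add_of_nonneg hMnn)⟩
  simpa only [hM.eq] using posSemidef_conjTranspose_mul_self (S * A * S)

/-- if `D` is diagonal with positive entries, `A` is symmetric nonnegative,
`0 ≤ λ ≤ 1` and `D^{-1/2} A D^{-1/2} ⪯ (1-λ) I`, then
`0 ⪯ D^{-1/2} A D⁻¹ A D^{-1/2} ⪯ (1-λ)² I`. -/
theorem stmt4 {n : ℕ} (d : Fin n → ℝ) (hd : ∀ i, 0 < d i)
    (D : Matrix (Fin n) (Fin n) ℝ) (hD : D = Matrix.diagonal d)
    (A : Matrix (Fin n) (Fin n) ℝ) (hA : A.IsSymm) (hAnn : ∀ i j, 0 ≤ A i j)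
    (lam : ℝ) (hlam0 : 0 ≤ lam) (hlam1 : lam ≤ 1)
    (S : Matrix (Fin n) (Fin n) ℝ)
    (hS : S = Matrix.diagonal fun i => (Real.sqrt (d i))⁻¹)
    (hbound : ((1 - lam) • (1 : Matrix (Fin n) (Fin n) ℝ) - S * A * S).PosSemidef) :
    (S * A * D⁻¹ * A * S).PosSemidef ∧
      ((1 - lam) ^ 2 • (1 : Matrix (Fin n) (Fin n) ℝ) - S * A * D⁻¹ * A * S).PosSemidef :=
  stmt4_general d hd D hD A hAnn lam hlam1 S hS hbound
end

section
/- Let D and D̂ be n×n real diagonal matrices with strictly positive diagonal entries, let A and be symmetric n×n real matrices with nonnegative entries such that D − A and D̂ − are positive definite, and let ε ≥ 0 and 0 ≤ λ ≤ 1 be reals. Suppose D ≈_ε D̂, (D̂ − Â) ≈_ε (D − A·D⁻¹·A), and D^{-1/2}·A·D^{-1/2} ⪯ (1−λ)·I. Then (1 − exp(2ε))·I ⪯ D̂^{-1/2}·Â·D̂^{-1/2} ⪯ (1 − (1 − (1−λ)²)·exp(−2ε))·I; equivalently, all eigenvalues of D̂⁻¹·Â lie between 1 − exp(2ε) and 1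 − (1 − (1−λ)²)·exp(−2ε). -/
/-!
Put `B = D^{-1/2} A D^{-1/2}`. Since `B` has nonnegative entries, `xᵀ B x ≥ -|x|ᵀ B |x|`, so
`B ⪯ (1-λ) I` forces `-(1-λ) I ⪯ B`; then `(1-λ) I ∓ B` are commuting positive semidefinite
matrices and `B² ⪯ (1-λ)² I`, i.e. `A D⁻¹ A ⪯ (1-λ)² D`. Thus `D - A D⁻¹ A` lies between
`(1 - (1-λ)²) D` and `D`. The two `ε`-approximations carry these bounds over to `D̂ - Â` relative
to `D̂` at the cost of a factor `exp(±2ε)`, and conjugating by `D̂^{-1/2}` gives the claim.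
-/

open Matrix

/-- `X ≈_ε Y` : both `exp(ε) • X - Y` and `Y - exp(-ε) • X` are positive semidefinite. -/
def MApprox {n : ℕ} (ε : ℝ) (X Y : Matrix (Fin n) (Fin n) ℝ) : Prop :=
  (Real.exp ε • X - Y).PosSemidef ∧ (Y - Real.exp (-ε) • X).PosSemidef

open scoped MatrixOrder

section StarOrderedAlgebra

variable {R : Type*} [Ring R] [PartialOrder R] [StarRing R] [StarOrderedRing R] [Algebra ℝ R]
  [PosSMulMono ℝ R]

theorem mul_self_le_sq_smul_one_of_neg_le_of_le {a : R} {t : ℝ} (ht : 0 ≤ t)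
    (h₁ : -(t • 1) ≤ a) (h₂ : a ≤ t • 1) : a * a ≤ t ^ 2 • (1 : R) := by
  rcases ht.eq_or_lt with rfl | ht
  · obtain rfl : a = 0 := le_antisymm (by simpa using h₂) (by simpa using h₁)
    simp
  set p : R := t • 1 - a
  set q : R := t • 1 + a
  have hp : 0 ≤ p := sub_nonneg.2 h₂
  have hq : 0 ≤ q := by simpa [q, add_comm] using neg_le_iff_add_nonneg.1 h₁
  -- `p` and `q` commute and `p + q = 2t`, so `p q p + q p q = (p + q) p q = 2t (t² - a²)`.
  have hpq : p * q * p + q * p * q = (2 * t) • (t ^ 2 • (1 : R) - a * a) := by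
    simp only [p, q, sub_mul, mul_sub, add_mul, mul_add, smul_mul_assoc, mul_smul_comm,
      one_mul, mul_one, smul_sub, smul_add, smul_smul]
    module
  have h : 0 ≤ (2 * t) • (t ^ 2 • (1 : R) - a * a) :=
    hpq ▸ add_nonneg ((IsSelfAdjoint.of_nonneg hp).conjugate_nonneg hq)
      ((IsSelfAdjoint.of_nonneg hq).conjugate_nonneg hp)
  have h' := smul_nonneg (inv_nonneg.2 (by positivity : (0 : ℝ) ≤ 2 * t)) h
  rwa [smul_smul, inv_mul_cancel₀ (by positivity), one_smul, sub_nonneg] at h'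

end StarOrderedAlgebra

section NonnegEntries

variable {n : Type*} [Fintype n]

theorem neg_dotProduct_mulVec_abs_le {B : Matrix n n ℝ} (hB : ∀ i j, 0 ≤ B i j) (x : n → ℝ) :
    -(|x| ⬝ᵥ B *ᵥ |x|) ≤ x ⬝ᵥ B *ᵥ x := by
  simp only [dotProduct, mulVec, Finset.mul_sum, ← Finset.sum_neg_distrib]
  gcongr with i _ j _
  calc -(|x| i * (B i j * |x| j)) = -|x i * (B i j * x j)| := by
        simp [abs_mul, abs_of_nonneg (hB i j)]
    _ ≤ _ := neg_abs_le _

theorem neg_smul_one_le_of_le_smul_one [DecidableEq n] {B : Matrix n n ℝ}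
    (hB : ∀ i j, 0 ≤ B i j) {t : ℝ} (h : B ≤ t • 1) : -(t • 1) ≤ B := by
  have hsa₁ : IsSelfAdjoint (t • 1 : Matrix n n ℝ) := (IsSelfAdjoint.all t).smul (.one _)
  have hsa : IsSelfAdjoint B := by
    simpa using hsa₁.sub (IsSelfAdjoint.of_nonneg (sub_nonneg.2 h))
  rw [le_iff, sub_neg_eq_add, posSemidef_iff_dotProduct_mulVec]
  refine ⟨hsa.add hsa₁, fun x => ?_⟩
  have hx := (le_iff.1 h).dotProduct_mulVec_nonneg |x|
  have habs : |x| ⬝ᵥ |x| = x ⬝ᵥ x := by simp [dotProduct, abs_mul_abs_self]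
  simp only [star_trivial, add_mulVec, sub_mulVec, smul_mulVec, one_mulVec, dotProduct_add,
    dotProduct_sub, dotProduct_smul, smul_eq_mul, habs] at hx ⊢
  linarith [neg_dotProduct_mulVec_abs_le hB x]

end NonnegEntries

section DiagonalInvSqrt

variable {n : Type*} [DecidableEq n]

noncomputable def diagonalInvSqrt (d : n → ℝ) : Matrix n n ℝ :=
  diagonal fun i => (√(d i))⁻¹

namespace diagonalInvSqrt

theorem isSelfAdjoint (d : n → ℝ) : IsSelfAdjoint (diagonalInvSqrt d) :=
  isHermitian_diagonal_iff.2 fun _ => .all _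

variable [Fintype n] {d : n → ℝ}

theorem isUnit (hd : ∀ i, 0 < d i) : IsUnit (diagonalInvSqrt d) :=
  isUnit_diagonal.2 (Pi.isUnit_iff.2 fun i => (inv_pos.2 (Real.sqrt_pos.2 (hd i))).ne'.isUnit)

theorem mul_diagonal_mul (hd : ∀ i, 0 < d i) :
    diagonalInvSqrt d * diagonal d * diagonalInvSqrt d = 1 := by
  simp only [diagonalInvSqrt, diagonal_mul_diagonal, ← diagonal_one]
  congr 1 with i
  have := Real.sqrt_pos.2 (hd i)
  field_simp
  exact (Real.sq_sqrt (hd i).le).symm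

theorem mul_self (hd : ∀ i, 0 < d i) :
    diagonalInvSqrt d * diagonalInvSqrt d = (diagonal d)⁻¹ := by
  have hcomm : Commute (diagonalInvSqrt d) (diagonal d) := commute_diagonal _ _
  refine (inv_eq_left_inv ?_).symm
  rw [mul_assoc, hcomm.eq, ← mul_assoc, mul_diagonal_mul hd]

theorem conj_smul_diagonal (hd : ∀ i, 0 < d i) (c : ℝ) :
    diagonalInvSqrt d * (c • diagonal d) * diagonalInvSqrt d = c • 1 := by
  rw [mul_smul_comm, smul_mul_assoc, mul_diagonal_mul hd]

theorem conj_le_conj_iff (hd : ∀ i, 0 < d i) {X Y : Matrix n n ℝ} :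
    diagonalInvSqrt d * X * diagonalInvSqrt d ≤ diagonalInvSqrt d * Y * diagonalInvSqrt d ↔
      X ≤ Y := by
  have h := (isUnit hd).star_left_conjugate_nonneg_iff (x := Y - X)
  rwa [(isSelfAdjoint d).star_eq, mul_sub, sub_mul, sub_nonneg, sub_nonneg] at h

end diagonalInvSqrt

theorem mul_inv_diagonal_mul_le [Fintype n] {d : n → ℝ} (hd : ∀ i, 0 < d i) {A : Matrix n n ℝ}
    (hA : ∀ i j, 0 ≤ A i j) {t : ℝ} (ht : 0 ≤ t)
    (h : diagonalInvSqrt d * A * diagonalInvSqrt d ≤ t • 1) :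
    A * (diagonal d)⁻¹ * A ≤ t ^ 2 • diagonal d := by
  rw [← diagonalInvSqrt.conj_le_conj_iff hd, diagonalInvSqrt.conj_smul_diagonal hd,
    ← diagonalInvSqrt.mul_self hd]
  have hB : ∀ i j, 0 ≤ (diagonalInvSqrt d * A * diagonalInvSqrt d) i j := fun i j => by
    simp only [diagonalInvSqrt, mul_diagonal, diagonal_mul]
    have := hA i j
    positivity
  convert mul_self_le_sq_smul_one_of_neg_le_of_le ht (neg_smul_one_le_of_le_smul_one hB h) h
    using 1
  simp only [mul_assoc]

end DiagonalInvSqrt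

namespace MApprox

variable {n : ℕ} {ε : ℝ} {X Y : Matrix (Fin n) (Fin n) ℝ}

theorem le_exp_smul (h : MApprox ε X Y) : Y ≤ Real.exp ε • X := h.1

theorem exp_neg_smul_le (h : MApprox ε X Y) : Real.exp (-ε) • X ≤ Y := h.2

theorem symm (h : MApprox ε X Y) : MApprox ε Y X := by
  have h₁ := smul_le_smul_of_nonneg_left h.exp_neg_smul_le (Real.exp_pos ε).le
  have h₂ := smul_le_smul_of_nonneg_left h.le_exp_smul (Real.exp_pos (-ε)).le
  rw [smul_smul, ← Real.exp_add, add_neg_cancel, Real.exp_zero, one_smul] at h₁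
  rw [smul_smul, ← Real.exp_add, neg_add_cancel, Real.exp_zero, one_smul] at h₂
  exact ⟨h₁, h₂⟩

variable {D Dh Ah M : Matrix (Fin n) (Fin n) ℝ}

theorem one_sub_exp_smul_le (hD : MApprox ε D Dh) (hM : MApprox ε (Dh - Ah) (D - M))
    (hM₀ : 0 ≤ M) : (1 - Real.exp (2 * ε)) • Dh ≤ Ah := by
  rw [sub_smul, one_smul, sub_le_comm]
  calc Dh - Ah ≤ Real.exp ε • (D - M) := hM.symm.le_exp_smul
    _ ≤ Real.exp ε • D := smul_le_smul_of_nonneg_left (sub_le_self _ hM₀) (Real.exp_pos ε).le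
    _ ≤ Real.exp ε • Real.exp ε • Dh :=
      smul_le_smul_of_nonneg_left hD.symm.le_exp_smul (Real.exp_pos ε).le
    _ = Real.exp (2 * ε) • Dh := by rw [smul_smul, ← Real.exp_add, two_mul]

theorem le_one_sub_mul_exp_smul (hD : MApprox ε D Dh) (hM : MApprox ε (Dh - Ah) (D - M))
    {c : ℝ} (hc : 0 ≤ c) (hgap : c • D ≤ D - M) :
    Ah ≤ (1 - c * Real.exp (-(2 * ε))) • Dh := by
  rw [sub_smul, one_smul, le_sub_comm]
  calc (c * Real.exp (-(2 * ε))) • Dh = (c * Real.exp (-ε)) • Real.exp (-ε) • Dh := by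
        rw [smul_smul, mul_assoc, ← Real.exp_add, ← neg_add, ← two_mul]
    _ ≤ (c * Real.exp (-ε)) • D :=
      smul_le_smul_of_nonneg_left hD.symm.exp_neg_smul_le (mul_nonneg hc (Real.exp_pos _).le)
    _ = Real.exp (-ε) • c • D := by rw [smul_smul, mul_comm]
    _ ≤ Real.exp (-ε) • (D - M) := smul_le_smul_of_nonneg_left hgap (Real.exp_pos _).le
    _ ≤ Dh - Ah := hM.symm.exp_neg_smul_le

end MApprox

theorem stmt7_general {n : ℕ} (d dh : Fin n → ℝ) (hd : ∀ i, 0 < d i) (hdh : ∀ i, 0 < dh i)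
    (D Dhat : Matrix (Fin n) (Fin n) ℝ)
    (hD : D = Matrix.diagonal d) (hDhat : Dhat = Matrix.diagonal dh)
    (A Ahat : Matrix (Fin n) (Fin n) ℝ)
    (hA : A.IsSymm) (hAnn : ∀ i j, 0 ≤ A i j)
    (ε lam : ℝ) (hlam0 : 0 ≤ lam) (hlam1 : lam ≤ 1)
    (happroxD : MApprox ε D Dhat)
    (happroxM : MApprox ε (Dhat - Ahat) (D - A * D⁻¹ * A))
    (S Shat : Matrix (Fin n) (Fin n) ℝ)
    (hS : S = Matrix.diagonal fun i => (Real.sqrt (d i))⁻¹)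
    (hShat : Shat = Matrix.diagonal fun i => (Real.sqrt (dh i))⁻¹)
    (hbound : ((1 - lam) • (1 : Matrix (Fin n) (Fin n) ℝ) - S * A * S).PosSemidef) :
    (Shat * Ahat * Shat -
        (1 - Real.exp (2 * ε)) • (1 : Matrix (Fin n) (Fin n) ℝ)).PosSemidef ∧
      ((1 - (1 - (1 - lam) ^ 2) * Real.exp (-(2 * ε))) • (1 : Matrix (Fin n) (Fin n) ℝ) -
        Shat * Ahat * Shat).PosSemidef := by
  subst hD hDhat
  obtain rfl : S = diagonalInvSqrt d := hS
  obtain rfl : Shat = diagonalInvSqrt dh := hShat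
  have hADA : 0 ≤ A * (diagonal d)⁻¹ * A := by
    have h := star_left_conjugate_nonneg (PosSemidef.diagonal fun i => (hd i).le).inv.nonneg A
    rwa [star_eq_conjTranspose, conjTranspose_eq_transpose_of_trivial, hA.eq] at h
  have hgap : (1 - (1 - lam) ^ 2) • diagonal d ≤ diagonal d - A * (diagonal d)⁻¹ * A := by
    rw [sub_smul, one_smul]
    exact sub_le_sub_left (mul_inv_diagonal_mul_le hd hAnn (sub_nonneg.2 hlam1) hbound) _
  simp only [← le_iff, ← diagonalInvSqrt.conj_smul_diagonal hdh _,
    diagonalInvSqrt.conj_le_conj_iff hdh]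
  exact ⟨happroxD.one_sub_exp_smul_le happroxM hADA,
    happroxD.le_one_sub_mul_exp_smul happroxM (by nlinarith) hgap⟩

/-- if `D ≈_ε D̂`, `(D̂ - Â) ≈_ε (D - A D⁻¹ A)` and the largest eigenvalue of
`D⁻¹ A` is at most `1 - λ`, then the eigenvalues of `D̂⁻¹ Â` lie between `1 - exp(2ε)` and
`1 - (1 - (1-λ)²) exp(-2ε)`. -/
theorem stmt7 {n : ℕ} (d dh : Fin n → ℝ) (hd : ∀ i, 0 < d i) (hdh : ∀ i, 0 < dh i)
    (D Dhat : Matrix (Fin n) (Fin n) ℝ)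
    (hD : D = Matrix.diagonal d) (hDhat : Dhat = Matrix.diagonal dh)
    (A Ahat : Matrix (Fin n) (Fin n) ℝ)
    (hA : A.IsSymm) (hAnn : ∀ i j, 0 ≤ A i j)
    (hAhat : Ahat.IsSymm) (hAhatnn : ∀ i j, 0 ≤ Ahat i j)
    (hDA : (D - A).PosDef) (hDhatAhat : (Dhat - Ahat).PosDef)
    (ε lam : ℝ) (hε : 0 ≤ ε) (hlam0 : 0 ≤ lam) (hlam1 : lam ≤ 1)
    (happroxD : MApprox ε D Dhat)
    (happroxM : MApprox ε (Dhat - Ahat) (D - A * D⁻¹ * A))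
    (S Shat : Matrix (Fin n) (Fin n) ℝ)
    (hS : S = Matrix.diagonal fun i => (Real.sqrt (d i))⁻¹)
    (hShat : Shat = Matrix.diagonal fun i => (Real.sqrt (dh i))⁻¹)
    (hbound : ((1 - lam) • (1 : Matrix (Fin n) (Fin n) ℝ) - S * A * S).PosSemidef) :
    (Shat * Ahat * Shat -
        (1 - Real.exp (2 * ε)) • (1 : Matrix (Fin n) (Fin n) ℝ)).PosSemidef ∧
      ((1 - (1 - (1 - lam) ^ 2) * Real.exp (-(2 * ε))) • (1 : Matrix (Fin n) (Fin n) ℝ) -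
        Shat * Ahat * Shat).PosSemidef :=
  stmt7_general d dh hd hdh D Dhat hD hDhat A Ahat hA hAnn ε lam hlam0 hlam1 happroxD happroxM S
    Shat hS hShat hbound
end

section
/- Let D be an n×n real diagonal matrix and A a symmetric n×n real matrix with nonnegative entries such that M := D − A is positive definite and diagonally dominant (i.e., for every i, M_{ii} ≥ ∑_{j ≠ i} |M_{ij}|). Then the matrix A·D⁻¹·A has nonnegative entries, and M̂ := D − A·D⁻¹·A is symmetric, positive definite, diagonally dominant, and has nonpositive off-diagonal entries after subtracting the nonnegative matrix A·D⁻¹·A from the diagonal matrix D (i.e., all off-diagonal entries of M̂ are nonpositive). -/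
/-!
Write `D = diag d`. Since `A ≥ 0` entrywise, `|xᵀAx| ≤ |x|ᵀA|x|`, so `xᵀ(D + A)x ≥ |x|ᵀ(D - A)|x|`
and `D + A` is positive definite along with `D - A`. For `y = D⁻¹Ax` one has
`(x + y)ᵀ(D - A)(x + y) + (x - y)ᵀ(D + A)(x - y) = 2 xᵀ(D - AD⁻¹A)x`, and `x + y`, `x - y` are
not both zero when `x ≠ 0`; hence `D - AD⁻¹A` is positive definite.

For a matrix `diag d - B` with `B ≥ 0`, diagonal dominance says that the row sums of `B` are at
most `d`. This passes from `A` to `AD⁻¹A`, since `D⁻¹` shrinks the row sums of `A` to at most `1`.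
-/

open Finset Matrix

namespace Matrix

variable {ι : Type*} [Fintype ι]

theorem dotProduct_mulVec_comm_of_isSymm {A : Matrix ι ι ℝ} (hA : A.IsSymm) (x y : ι → ℝ) :
    x ⬝ᵥ A *ᵥ y = y ⬝ᵥ A *ᵥ x := by
  rw [dotProduct_mulVec, ← mulVec_transpose, hA, dotProduct_comm]

theorem abs_dotProduct_mulVec_le {A : Matrix ι ι ℝ} (hA : ∀ i j, 0 ≤ A i j) (x y : ι → ℝ) :
    |x ⬝ᵥ A *ᵥ y| ≤ |x| ⬝ᵥ A *ᵥ |y| := by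
  rw [dot_mulVec_eq_sum_sum, dot_mulVec_eq_sum_sum]
  refine (abs_sum_le_sum_abs _ _).trans <| sum_le_sum fun j _ => ?_
  refine (abs_sum_le_sum_abs _ _).trans <| sum_le_sum fun i _ => ?_
  simp [abs_mul, abs_of_nonneg (hA i j)]

theorem dotProduct_sub_mulVec_add_dotProduct_add_mulVec {D A : Matrix ι ι ℝ} (hD : D.IsSymm)
    (hA : A.IsSymm) {x y : ι → ℝ} (hy : D *ᵥ y = A *ᵥ x) :
    (x + y) ⬝ᵥ (D - A) *ᵥ (x + y) + (x - y) ⬝ᵥ (D + A) *ᵥ (x - y) =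
      2 * (x ⬝ᵥ D *ᵥ x - x ⬝ᵥ A *ᵥ y) := by
  have hDxy : x ⬝ᵥ D *ᵥ y = x ⬝ᵥ A *ᵥ x := by rw [hy]
  have hDyx : y ⬝ᵥ D *ᵥ x = x ⬝ᵥ A *ᵥ x := by rw [dotProduct_mulVec_comm_of_isSymm hD, hDxy]
  have hDyy : y ⬝ᵥ D *ᵥ y = x ⬝ᵥ A *ᵥ y := by rw [hy, dotProduct_mulVec_comm_of_isSymm hA]
  have hAyx := dotProduct_mulVec_comm_of_isSymm hA y x
  simp only [sub_mulVec, add_mulVec, mulVec_add, mulVec_sub, dotProduct_sub, dotProduct_add,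
    add_dotProduct, sub_dotProduct]
  linarith

variable [DecidableEq ι]

theorem mul_diagonal_mul_apply {R : Type*} [CommSemiring R] (A B : Matrix ι ι R) (w : ι → R)
    (i j : ι) : (A * diagonal w * B) i j = ∑ k, A i k * w k * B k j := by
  rw [mul_apply]
  simp only [mul_diagonal]

theorem inv_diagonal_of_ne_zero {K : Type*} [Field K] {d : ι → K} (hd : ∀ i, d i ≠ 0) :
    (diagonal d)⁻¹ = diagonal d⁻¹ :=
  inv_eq_right_inv <| by
    rw [diagonal_mul_diagonal, ← diagonal_one]
    exact congrArg diagonal (funext fun i => mul_inv_cancel₀ (hd i))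

theorem dotProduct_diagonal_mulVec_abs (d x : ι → ℝ) :
    |x| ⬝ᵥ diagonal d *ᵥ |x| = x ⬝ᵥ diagonal d *ᵥ x := by
  simp only [dotProduct, mulVec_diagonal, Pi.abs_apply]
  exact sum_congr rfl fun i _ => by rw [mul_left_comm, abs_mul_abs_self, mul_left_comm]

theorem posDef_diagonal_add_of_posDef_diagonal_sub {d : ι → ℝ} {A : Matrix ι ι ℝ}
    (hA : ∀ i j, 0 ≤ A i j) (hsub : (diagonal d - A).PosDef) : (diagonal d + A).PosDef := by
  have hAherm : A.IsHermitian := by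
    simpa using (isHermitian_diagonal d).sub hsub.isHermitian
  refine .of_dotProduct_mulVec_pos ((isHermitian_diagonal d).add hAherm) fun x hx => ?_
  have habs : |x| ≠ 0 := by simpa using hx
  have hpos := hsub.dotProduct_mulVec_pos habs
  simp only [star_trivial, sub_mulVec, add_mulVec, dotProduct_sub, dotProduct_add,
    dotProduct_diagonal_mulVec_abs] at hpos ⊢
  linarith [neg_abs_le (x ⬝ᵥ A *ᵥ x), abs_dotProduct_mulVec_le hA x x]

theorem PosDef.sub_mul_inv_mul {D A : Matrix ι ι ℝ} (hsub : (D - A).PosDef)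
    (hadd : (D + A).PosDef) : (D - A * D⁻¹ * A).PosDef := by
  have hD : D.PosDef := by
    have : D = (2⁻¹ : ℝ) • (D - A + (D + A)) := by module
    exact this ▸ (hsub.add hadd).smul (by norm_num)
  have hDs : D.IsSymm := isHermitian_iff_isSymm.mp hD.isHermitian
  have hAs : A.IsSymm := by simpa using hDs.sub (isHermitian_iff_isSymm.mp hsub.isHermitian)
  have hADA : (A * D⁻¹ * A).IsSymm := by
    simpa [hAs.eq] using isHermitian_conjTranspose_mul_mul A hD.isHermitian.inv
  refine .of_dotProduct_mulVec_pos (isHermitian_iff_isSymm.mpr (hDs.sub hADA)) fun x hx => ?_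
  set y := D⁻¹ *ᵥ A *ᵥ x
  have hy : D *ᵥ y = A *ᵥ x := by
    rw [mulVec_mulVec, mul_nonsing_inv _ (isUnit_iff_isUnit_det D |>.mp hD.isUnit), one_mulVec]
  have hnz : x + y ≠ 0 ∨ x - y ≠ 0 := by
    by_contra! h
    have : x = (2⁻¹ : ℝ) • ((x + y) + (x - y)) := by module
    simp only [h.1, h.2, add_zero, smul_zero] at this
    exact hx this
  have hsum : 0 < (x + y) ⬝ᵥ (D - A) *ᵥ (x + y) + (x - y) ⬝ᵥ (D + A) *ᵥ (x - y) := by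
    have hsub' := hsub.posSemidef.dotProduct_mulVec_nonneg (x + y)
    have hadd' := hadd.posSemidef.dotProduct_mulVec_nonneg (x - y)
    rw [star_trivial] at hsub' hadd'
    rcases hnz with h | h
    · exact add_pos_of_pos_of_nonneg (by simpa using hsub.dotProduct_mulVec_pos h) hadd'
    · exact add_pos_of_nonneg_of_pos hsub' (by simpa using hadd.dotProduct_mulVec_pos h)
  rw [dotProduct_sub_mulVec_add_dotProduct_add_mulVec hDs hAs hy] at hsum
  rw [star_trivial, sub_mulVec, dotProduct_sub, ← mulVec_mulVec, ← mulVec_mulVec]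
  linarith

theorem sum_abs_diagonal_sub_erase_le_iff {d : ι → ℝ} {B : Matrix ι ι ℝ}
    (hB : ∀ i j, 0 ≤ B i j) (i : ι) :
    ∑ j ∈ univ.erase i, |(diagonal d - B) i j| ≤ (diagonal d - B) i i ↔ ∑ j, B i j ≤ d i := by
  have hoff : ∑ j ∈ univ.erase i, |(diagonal d - B) i j| = ∑ j ∈ univ.erase i, B i j :=
    sum_congr rfl fun j hj => by
      rw [sub_apply, diagonal_apply_ne d (ne_of_mem_erase hj).symm, zero_sub, abs_neg,
        abs_of_nonneg (hB i j)]
  rw [hoff, sub_apply, diagonal_apply_eq, ← sum_erase_add _ _ (mem_univ i), le_sub_iff_add_le]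

variable {d : ι → ℝ} {A : Matrix ι ι ℝ}

theorem mul_inv_diagonal_mul_nonneg (hA : ∀ i j, 0 ≤ A i j) (hd : ∀ i, 0 < d i) (i j : ι) :
    0 ≤ (A * (diagonal d)⁻¹ * A) i j := by
  rw [inv_diagonal_of_ne_zero fun k => (hd k).ne', mul_diagonal_mul_apply]
  exact sum_nonneg fun k _ =>
    mul_nonneg (mul_nonneg (hA i k) (inv_nonneg.2 (hd k).le)) (hA k j)

theorem sum_mul_inv_diagonal_mul_le (hA : ∀ i j, 0 ≤ A i j) (hd : ∀ i, 0 < d i)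
    (hrow : ∀ i, ∑ j, A i j ≤ d i) (i : ι) : ∑ j, (A * (diagonal d)⁻¹ * A) i j ≤ d i := by
  have hcontract (k : ι) : (d k)⁻¹ * ∑ j, A k j ≤ 1 := (inv_mul_le_one₀ (hd k)).mpr (hrow k)
  calc ∑ j, (A * (diagonal d)⁻¹ * A) i j
      = ∑ k, A i k * ((d k)⁻¹ * ∑ j, A k j) := by
        simp only [inv_diagonal_of_ne_zero fun k => (hd k).ne', mul_diagonal_mul_apply,
          Pi.inv_apply, mul_sum, mul_assoc]
        exact sum_comm
    _ ≤ ∑ k, A i k := sum_le_sum fun k _ => mul_le_of_le_one_right (hA i k) (hcontract k)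
    _ ≤ d i := hrow i

end Matrix

theorem stmt9_general {n : ℕ} (dv : Fin n → ℝ)
    (D : Matrix (Fin n) (Fin n) ℝ) (hD : D = Matrix.diagonal dv)
    (A : Matrix (Fin n) (Fin n) ℝ) (hAnn : ∀ i j, 0 ≤ A i j)
    (hPD : (D - A).PosDef)
    (hDomin : ∀ i, ∑ j ∈ Finset.univ.erase i, |(D - A) i j| ≤ (D - A) i i) :
    (∀ i j, 0 ≤ (A * D⁻¹ * A) i j) ∧
      (D - A * D⁻¹ * A).IsSymm ∧
      (D - A * D⁻¹ * A).PosDef ∧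
      (∀ i, ∑ j ∈ Finset.univ.erase i, |(D - A * D⁻¹ * A) i j| ≤ (D - A * D⁻¹ * A) i i) ∧
      (∀ i j, i ≠ j → (D - A * D⁻¹ * A) i j ≤ 0) := by
  subst hD
  have hd (i : Fin n) : 0 < dv i := by
    have := hPD.diag_pos (i := i)
    rw [Matrix.sub_apply, diagonal_apply_eq] at this
    linarith [hAnn i i]
  have hrow (i : Fin n) : ∑ j, A i j ≤ dv i :=
    (sum_abs_diagonal_sub_erase_le_iff hAnn i).mp (hDomin i)
  have hE := mul_inv_diagonal_mul_nonneg hAnn hd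
  have hPD' := hPD.sub_mul_inv_mul (posDef_diagonal_add_of_posDef_diagonal_sub hAnn hPD)
  refine ⟨hE, isHermitian_iff_isSymm.mp hPD'.isHermitian, hPD', fun i => ?_, fun i j hij => ?_⟩
  · exact (sum_abs_diagonal_sub_erase_le_iff hE i).mpr (sum_mul_inv_diagonal_mul_le hAnn hd hrow i)
  · rw [Matrix.sub_apply, diagonal_apply_ne _ hij, zero_sub, neg_nonpos]
    exact hE i j

/-- if `M = D - A` is positive definite and diagonally dominant, with `D`
diagonal and `A` symmetric nonnegative, then `A D⁻¹ A` is nonnegative and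
`M̂ = D - A D⁻¹ A` is symmetric, positive definite, diagonally dominant, and has
nonpositive off-diagonal entries. -/
theorem stmt9 {n : ℕ} (dv : Fin n → ℝ)
    (D : Matrix (Fin n) (Fin n) ℝ) (hD : D = Matrix.diagonal dv)
    (A : Matrix (Fin n) (Fin n) ℝ) (hA : A.IsSymm) (hAnn : ∀ i j, 0 ≤ A i j)
    (hPD : (D - A).PosDef)
    (hDomin : ∀ i, ∑ j ∈ Finset.univ.erase i, |(D - A) i j| ≤ (D - A) i i) :
    (∀ i j, 0 ≤ (A * D⁻¹ * A) i j) ∧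
      (D - A * D⁻¹ * A).IsSymm ∧
      (D - A * D⁻¹ * A).PosDef ∧
      (∀ i, ∑ j ∈ Finset.univ.erase i, |(D - A * D⁻¹ * A) i j| ≤ (D - A * D⁻¹ * A) i i) ∧
      (∀ i j, i ≠ j → (D - A * D⁻¹ * A) i j ≤ 0) :=
  stmt9_general dv D hD A hAnn hPD hDomin
end

section
/- Let A be a symmetric n×n real matrix with nonnegative entries, D an n×n real diagonal matrix with strictly positive diagonal entries, and u an index with d_u := ∑_{v ≠ u} A_{uv} > 0. Define the n×n matrix L_u by (L_u)_{vw} = −A_{uv}·A_{uw}/D_{uu} for distinct v, w both different from u, (L_u)_{vv} = ∑_{w ≠ v, w ≠ u} A_{uv}·A_{uw}/D_{uu} for v ≠ u, and all entries in row u and column u equal to 0. Then for any two distinct indices v, w different from u with A_{uv} > 0 and A_{uw} > 0, the vector y := (D_{uu}/d_u)·( e_v/A_{uv} − e_w/A_{uw} ) satisfies L_u · y = e_v − e_w and (e_v − e_w)ᵀ · y = (D_{uu}/d_u)·( 1/A_{uv} + 1/A_{uw} ). In particular, the effective resistance between v and w in the weighted complete graph on the neighbors of u with edge weights A_{uv}·A_{uw}/D_{uu}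 equals (D_{uu}/d_u)·( 1/A_{uv} + 1/A_{uw} ). -/
/-!
Writing `a` for the row `A u` with its `u`-th entry replaced by `0`, `L_u` is `D_uu⁻¹` times the
Laplacian `(∑ a) • diag a - a aᵀ` of the complete graph with edge weights `a v * a w`. Applied to
`e_v / a_v` this Laplacian gives `(∑ a) e_v - a`, so on `e_v / a_v - e_w / a_w` the rank-one part
cancels and the result is `d_u (e_v - e_w)`.
-/

open Matrix

namespace Matrix

variable {ι K : Type*} [Fintype ι] [DecidableEq ι] [Field K]

def productWeightLaplacian (a : ι → K) : Matrix ι ι K :=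
  (∑ i, a i) • diagonal a - vecMulVec a a

theorem productWeightLaplacian_apply (a : ι → K) (v w : ι) :
    productWeightLaplacian a v w =
      if v = w then ∑ x ∈ Finset.univ.erase v, a v * a x else -(a v * a w) := by
  split_ifs with hvw
  · subst hvw
    rw [← Finset.mul_sum, Finset.sum_erase_eq_sub (Finset.mem_univ v)]
    simp [productWeightLaplacian, vecMulVec_apply]
    ring
  · simp [productWeightLaplacian, vecMulVec_apply, hvw]

theorem productWeightLaplacian_mulVec_inv_smul_single (a : ι → K) {v : ι} (hv : a v ≠ 0) :
    productWeightLaplacian a *ᵥ ((a v)⁻¹ • Pi.single v 1) = (∑ i, a i) • Pi.single v 1 - a := by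
  rw [mulVec_smul, productWeightLaplacian, sub_mulVec, smul_mulVec, diagonal_mulVec_single,
    mulVec_single_one]
  ext i
  simp only [col_apply, vecMulVec_apply, Pi.sub_apply, Pi.smul_apply, Pi.single_apply, smul_eq_mul]
  split_ifs <;> field_simp
  ring

theorem eq_inv_smul_productWeightLaplacian_update {a : ι → K} {c : K} {u : ι} {L : Matrix ι ι K}
    (hL : ∀ v w, L v w =
      if v = u ∨ w = u then 0
      else if v = w then ∑ x ∈ (Finset.univ.erase v).erase u, a v * a x / c
      else -(a v * a w / c)) :
    L = c⁻¹ • productWeightLaplacian (Function.update a u 0) := by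
  ext v w
  rw [hL, smul_apply, productWeightLaplacian_apply, smul_eq_mul]
  by_cases hvu : v = u
  · subst hvu; simp
  by_cases hwu : w = u
  · subst hwu; simp [hvu]
  rw [if_neg (by tauto), Function.update_of_ne hvu]
  split_ifs with hvw
  · rw [← Finset.sum_erase (Finset.univ.erase v) (a := u) (by simp), Finset.mul_sum]
    refine Finset.sum_congr rfl fun x hx => ?_
    rw [Function.update_of_ne (Finset.ne_of_mem_erase hx)]
    ring
  · rw [Function.update_of_ne hwu]
    ring

theorem productWeightLaplacian_mulVec_sub {a : ι → K} {v w : ι} (hv : a v ≠ 0) (hw : a w ≠ 0) :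
    productWeightLaplacian a *ᵥ ((a v)⁻¹ • Pi.single v 1 - (a w)⁻¹ • Pi.single w 1) =
      (∑ i, a i) • (Pi.single v 1 - Pi.single w 1) := by
  rw [mulVec_sub, productWeightLaplacian_mulVec_inv_smul_single a hv,
    productWeightLaplacian_mulVec_inv_smul_single a hw, smul_sub]
  abel

end Matrix

theorem stmt10_general {n : ℕ} (A : Matrix (Fin n) (Fin n) ℝ)
    (dvec : Fin n → ℝ) (hdvec : ∀ i, 0 < dvec i)
    (D : Matrix (Fin n) (Fin n) ℝ) (hD : D = Matrix.diagonal dvec)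
    (u : Fin n) (du : ℝ) (hdu : du = ∑ v ∈ Finset.univ.erase u, A u v) (hdupos : 0 < du)
    (Lu : Matrix (Fin n) (Fin n) ℝ)
    (hLu : ∀ v w, Lu v w =
      if v = u ∨ w = u then 0
      else if v = w then ∑ x ∈ (Finset.univ.erase v).erase u, A u v * A u x / D u u
      else -(A u v * A u w / D u u))
    (v w : Fin n) (hvw : v ≠ w) (hvu : v ≠ u) (hwu : w ≠ u)
    (hv : 0 < A u v) (hw : 0 < A u w)
    (y : Fin n → ℝ)
    (hy : y = (D u u / du) •
      ((A u v)⁻¹ • (Pi.single v (1 : ℝ) : Fin n → ℝ) -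
        (A u w)⁻¹ • (Pi.single w (1 : ℝ) : Fin n → ℝ))) :
    Lu *ᵥ y = Pi.single v (1 : ℝ) - Pi.single w (1 : ℝ) ∧
      (Pi.single v (1 : ℝ) - Pi.single w (1 : ℝ)) ⬝ᵥ y =
        (D u u / du) * (1 / A u v + 1 / A u w) := by
  refine ⟨?_, by rw [hy]; simp [hvw, hvw.symm]⟩
  obtain ⟨a, ha⟩ : ∃ a, a = Function.update (A u) u 0 := ⟨_, rfl⟩
  have hDuu : D u u ≠ 0 := by
    rw [hD, diagonal_apply_eq]
    exact (hdvec u).ne'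
  have hsum : ∑ i, a i = du := by
    rw [hdu, ha, ← Finset.sum_erase _ (Function.update_self u 0 (A u))]
    exact Finset.sum_congr rfl fun x hx => Function.update_of_ne (Finset.ne_of_mem_erase hx) _ _
  have hav : A u v = a v := by rw [ha, Function.update_of_ne hvu]
  have haw : A u w = a w := by rw [ha, Function.update_of_ne hwu]
  rw [eq_inv_smul_productWeightLaplacian_update hLu, ← ha, hy, hav, haw, smul_mulVec, mulVec_smul,
    productWeightLaplacian_mulVec_sub (hav ▸ hv.ne') (haw ▸ hw.ne'), hsum, smul_smul, smul_smul,
    show (D u u)⁻¹ * (D u u / du) * du = 1 by field_simp, one_smul]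

/-- `L_u` is the Laplacian of the weighted complete graph on the neighbors of
`u` in which the edge `{v, w}` has weight `A_{uv} A_{uw} / D_{uu}`.  For distinct
`v, w ≠ u` with `A_{uv}, A_{uw} > 0`, the vector
`y = (D_{uu}/d_u) (e_v / A_{uv} - e_w / A_{uw})` satisfies `L_u y = e_v - e_w` and
`(e_v - e_w)ᵀ y = (D_{uu}/d_u) (1/A_{uv} + 1/A_{uw})`, so the effective resistance between
`v` and `w` equals `(D_{uu}/d_u) (1/A_{uv} + 1/A_{uw})`. -/
theorem stmt10 {n : ℕ} (A : Matrix (Fin n) (Fin n) ℝ)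
    (hA : A.IsSymm) (hAnn : ∀ i j, 0 ≤ A i j)
    (dvec : Fin n → ℝ) (hdvec : ∀ i, 0 < dvec i)
    (D : Matrix (Fin n) (Fin n) ℝ) (hD : D = Matrix.diagonal dvec)
    (u : Fin n) (du : ℝ) (hdu : du = ∑ v ∈ Finset.univ.erase u, A u v) (hdupos : 0 < du)
    (Lu : Matrix (Fin n) (Fin n) ℝ)
    (hLu : ∀ v w, Lu v w =
      if v = u ∨ w = u then 0
      else if v = w then ∑ x ∈ (Finset.univ.erase v).erase u, A u v * A u x / D u u
      else -(A u v * A u w / D u u))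
    (v w : Fin n) (hvw : v ≠ w) (hvu : v ≠ u) (hwu : w ≠ u)
    (hv : 0 < A u v) (hw : 0 < A u w)
    (y : Fin n → ℝ)
    (hy : y = (D u u / du) •
      ((A u v)⁻¹ • (Pi.single v (1 : ℝ) : Fin n → ℝ) -
        (A u w)⁻¹ • (Pi.single w (1 : ℝ) : Fin n → ℝ))) :
    Lu *ᵥ y = Pi.single v (1 : ℝ) - Pi.single w (1 : ℝ) ∧
      (Pi.single v (1 : ℝ) - Pi.single w (1 : ℝ)) ⬝ᵥ y =
        (D u u / du) * (1 / A u v + 1 / A u w) :=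
  stmt10_general A dvec hdvec D hD u du hdu hdupos Lu hLu v w hvw hvu hwu hv hw y hy
end

section
/- Let n ≥ 1 and let L be a symmetric positive semidefinite n×n real matrix with L·𝟏 = 0, where 𝟏 is the all-ones vector. Let λ₂ ≥ 0 be a real number such that xᵀ·L·x ≥ λ₂·‖x‖² for every x ∈ ℝⁿ orthogonal to 𝟏. Let M be the (n−1)×(n−1) principal submatrix of L obtained by deleting the first row and column. Then for every v ∈ ℝ^{n−1}, vᵀ·M·v ≥ (λ₂/n)·‖v‖². In particular, the smallest eigenvalue of M is at least λ₂/n. -/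
/-!
Pad `v` with a zero first coordinate to get `y`, and subtract the mean: `x = y - mean(y) • 𝟏`
sums to zero. Since `L` is symmetric and kills `𝟏`, `xᵀ L x = yᵀ L y = vᵀ M v`, while
Cauchy–Schwarz `(∑ v)² ≤ n ‖v‖²` gives `‖x‖² = ‖v‖² - (∑ v)² / (n + 1) ≥ ‖v‖² / (n + 1)`.
The eigenvalue bound follows by evaluating the quadratic form at an eigenvector.
-/

open Matrix

namespace Matrix

theorem le_of_mem_spectrum_of_forall_mul_dotProduct_le {ι : Type*} [Fintype ι]
    [DecidableEq ι] {M : Matrix ι ι ℝ} {c : ℝ}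
    (h : ∀ v : ι → ℝ, c * (v ⬝ᵥ v) ≤ v ⬝ᵥ (M *ᵥ v)) {r : ℝ} (hr : r ∈ spectrum ℝ M) :
    c ≤ r := by
  rw [← spectrum_toLin', ← Module.End.hasEigenvalue_iff_mem_spectrum] at hr
  obtain ⟨v, hv⟩ := hr.exists_hasEigenvector
  obtain ⟨hMv, hv0⟩ := Module.End.hasEigenvector_iff.mp hv
  rw [Module.End.mem_eigenspace_iff, toLin'_apply] at hMv
  have hvv : 0 < v ⬝ᵥ v := by simpa using dotProduct_star_self_pos_iff.mpr hv0
  have hcr := h v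
  rw [hMv, dotProduct_smul, smul_eq_mul] at hcr
  exact le_of_mul_le_mul_right hcr hvv

theorem IsSymm.dotProduct_mulVec_add_of_mulVec_eq_zero {ι R : Type*} [Fintype ι]
    [CommRing R] {L : Matrix ι ι R} (hL : L.IsSymm) {w : ι → R} (hw : L *ᵥ w = 0)
    (y : ι → R) : (y + w) ⬝ᵥ (L *ᵥ (y + w)) = y ⬝ᵥ (L *ᵥ y) := by
  have hwL : w ⬝ᵥ (L *ᵥ y) = 0 := by
    rw [dotProduct_mulVec, ← mulVec_transpose, hL.eq, hw, zero_dotProduct]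
  rw [mulVec_add, hw, add_zero, add_dotProduct, hwL, add_zero]

theorem cons_zero_dotProduct_mulVec_cons_zero {n : ℕ} {R : Type*} [CommRing R]
    (L : Matrix (Fin (n + 1)) (Fin (n + 1)) R) (v : Fin n → R) :
    (Fin.cons 0 v : Fin (n + 1) → R) ⬝ᵥ (L *ᵥ Fin.cons 0 v) =
      v ⬝ᵥ (L.submatrix Fin.succ Fin.succ *ᵥ v) := by
  simp [dotProduct, mulVec, Fin.sum_univ_succ]

end Matrix

section Centered

variable {ι : Type*} [Fintype ι]

noncomputable def centered (y : ι → ℝ) : ι → ℝ :=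
  fun i => y i - (∑ j, y j) / Fintype.card ι

theorem centered_eq_add_smul_one (y : ι → ℝ) :
    centered y = y + (-((∑ j, y j) / Fintype.card ι)) • fun _ => 1 := by
  ext i
  simp [centered, sub_eq_add_neg]

variable [Nonempty ι]

theorem sum_centered (y : ι → ℝ) : ∑ i, centered y i = 0 := by
  have hcard : (Fintype.card ι : ℝ) ≠ 0 := Nat.cast_ne_zero.mpr Fintype.card_ne_zero
  simp only [centered, Finset.sum_sub_distrib, Finset.sum_const, Finset.card_univ, nsmul_eq_mul]
  field_simp
  ring

theorem centered_dotProduct_centered (y : ι → ℝ) :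
    centered y ⬝ᵥ centered y = y ⬝ᵥ y - (∑ i, y i) ^ 2 / Fintype.card ι := by
  have hcard : (Fintype.card ι : ℝ) ≠ 0 := Nat.cast_ne_zero.mpr Fintype.card_ne_zero
  simp only [centered, dotProduct, sub_mul, mul_sub, Finset.sum_sub_distrib, ← Finset.sum_mul,
    ← Finset.mul_sum, Finset.sum_const, Finset.card_univ, nsmul_eq_mul]
  field_simp
  ring

end Centered

theorem dotProduct_self_div_le_centered_cons_zero {n : ℕ} (v : Fin n → ℝ) :
    (v ⬝ᵥ v) / (n + 1) ≤
      centered (Fin.cons 0 v : Fin (n + 1) → ℝ) ⬝ᵥ centered (Fin.cons 0 v) := by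
  have hcs : (∑ i, v i) ^ 2 ≤ n * (v ⬝ᵥ v) := by
    simpa [dotProduct, sq] using sq_sum_le_card_mul_sum_sq (s := Finset.univ) (f := v)
  have hcons : (Fin.cons 0 v : Fin (n + 1) → ℝ) ⬝ᵥ Fin.cons 0 v = v ⬝ᵥ v := by
    simp [dotProduct, Fin.sum_univ_succ]
  rw [centered_dotProduct_centered, hcons, Fin.sum_univ_succ, Fin.cons_zero, zero_add,
    Fintype.card_fin]
  simp only [Fin.cons_succ]
  push_cast
  rw [div_le_iff₀ (by positivity), sub_mul, div_mul_cancel₀ _ (by positivity)]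
  linarith

/-- if `L` is a symmetric PSD `(n+1) × (n+1)` matrix with `L 𝟏 = 0` and
`xᵀ L x ≥ λ₂ ‖x‖²` for every `x ⊥ 𝟏`, and `M` is obtained from `L` by deleting the first
row and column, then `vᵀ M v ≥ (λ₂ / (n+1)) ‖v‖²` for all `v`; in particular every
eigenvalue of `M` is at least `λ₂ / (n+1)`. -/
theorem stmt11 {n : ℕ} (L : Matrix (Fin (n + 1)) (Fin (n + 1)) ℝ)
    (hL : L.PosSemidef) (hL1 : L *ᵥ (fun _ => (1 : ℝ)) = 0)
    (lam2 : ℝ) (hlam2 : 0 ≤ lam2)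
    (hquad : ∀ x : Fin (n + 1) → ℝ, (∑ i, x i) = 0 →
      lam2 * (x ⬝ᵥ x) ≤ x ⬝ᵥ (L *ᵥ x))
    (M : Matrix (Fin n) (Fin n) ℝ) (hM : M = L.submatrix Fin.succ Fin.succ) :
    (∀ v : Fin n → ℝ, (lam2 / (n + 1)) * (v ⬝ᵥ v) ≤ v ⬝ᵥ (M *ᵥ v)) ∧
      ∀ r ∈ spectrum ℝ M, lam2 / (n + 1) ≤ r := by
  have hform (v : Fin n → ℝ) : (lam2 / (n + 1)) * (v ⬝ᵥ v) ≤ v ⬝ᵥ (M *ᵥ v) := by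
    have hx := centered_eq_add_smul_one (Fin.cons 0 v : Fin (n + 1) → ℝ)
    set x := centered (Fin.cons 0 v : Fin (n + 1) → ℝ)
    have hxLx : x ⬝ᵥ (L *ᵥ x) = v ⬝ᵥ (M *ᵥ v) := by
      rw [hx, (isHermitian_iff_isSymm.mp hL.isHermitian).dotProduct_mulVec_add_of_mulVec_eq_zero
        (by rw [mulVec_smul, hL1, smul_zero]), cons_zero_dotProduct_mulVec_cons_zero, hM]
    calc (lam2 / (n + 1)) * (v ⬝ᵥ v) = lam2 * ((v ⬝ᵥ v) / (n + 1)) := by ring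
      _ ≤ lam2 * (x ⬝ᵥ x) := by
        gcongr
        exact dotProduct_self_div_le_centered_cons_zero v
      _ ≤ x ⬝ᵥ (L *ᵥ x) := hquad x (sum_centered _)
      _ = v ⬝ᵥ (M *ᵥ v) := hxLx
  exact ⟨hform, fun r => le_of_mem_spectrum_of_forall_mul_dotProduct_le hform⟩
end
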